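/- Let y, λ ∈ ℝ₊^M with y ≠ 0, λ ≠ 0, and supp(y) ⊆ supp(λ); set Y = ‖y‖₁ and Λ = ‖λ‖₁. Let ε > 0 and suppose I(y‖λ) ≤ ε. Then ‖ y/Y − λ/Λ ‖₁ ≤ √(2ε/Y). -/

import Mathlib

/-!
Normalising to probability vectors `p = y / Y`, `q = λ / Λ` splits the divergence as
`I(y‖λ) = Y · I(p‖q) + Λ · klFun (Y / Λ)` with a nonnegative second term, so `I(p‖q) ≤ ε / Y`, and
Pinsker's inequality `‖p - q‖₁ ≤ √(2 I(p‖q))` concludes. Pinsker follows from the pointwise bound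
`3 (x - y)² / (2x + 4y) ≤ x log (x / y) + y - x` by Cauchy–Schwarz against the weights
`(2x + 4y) / 3`, which sum to `2`. The pointwise bound is a calculus exercise once `log t` is
compared with its Padé approximant `2 (t - 1) / (t + 1)`.
-/

noncomputable section

/-- ℓ₁ norm of a vector. -/
def l1norm {M : ℕ} (v : Fin M → ℝ) : ℝ := ∑ j, |v j|

/-- I-divergence of nonnegative vectors (with the convention `0 · log 0 = 0`, which holds
automatically since `Real.log 0 = 0`). -/
def Idiv {M : ℕ} (x y : Fin M → ℝ) : ℝ :=
  ∑ j, (x j * Real.log (x j / y j) + y j - x j)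

open Real Set Finset InformationTheory

lemma isMinOn_Ioi_zero_of_hasDerivAt {f f' : ℝ → ℝ} {a : ℝ} (ha : 0 < a)
    (hf : ∀ x, 0 < x → HasDerivAt f (f' x) x)
    (hleft : ∀ x, 0 < x → x < a → f' x ≤ 0) (hright : ∀ x, a < x → 0 ≤ f' x) :
    IsMinOn f (Ioi 0) a := by
  refine isMinOn_iff.2 fun t (ht : 0 < t) => ?_
  have hcont (u v : ℝ) (hu : 0 < u) : ContinuousOn f (Icc u v) := fun x hx =>
    (hf x (hu.trans_le hx.1)).continuousAt.continuousWithinAt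
  have hderiv (u v : ℝ) (hu : 0 < u) :
      ∀ x ∈ interior (Icc u v), HasDerivWithinAt f (f' x) (interior (Icc u v)) x := by
    intro x hx
    rw [interior_Icc] at hx
    exact (hf x (hu.trans hx.1)).hasDerivWithinAt
  rcases le_total a t with hat | hta
  · refine monotoneOn_of_hasDerivWithinAt_nonneg (convex_Icc a t) (hcont a t ha) (hderiv a t ha)
      (fun x hx => ?_) ⟨le_rfl, hat⟩ ⟨hat, le_rfl⟩ hat
    rw [interior_Icc] at hx
    exact hright x hx.1
  · refine antitoneOn_of_hasDerivWithinAt_nonpos (convex_Icc t a) (hcont t a ht) (hderiv t a ht)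
      (fun x hx => ?_) ⟨le_rfl, hta⟩ ⟨hta, le_rfl⟩ hta
    rw [interior_Icc] at hx
    exact hleft x (ht.trans hx.1) hx.2

lemma monotoneOn_log_sub_pade :
    MonotoneOn (fun t => log t - 2 * (t - 1) / (t + 1)) (Ioi 0) := by
  have hderiv (x : ℝ) (hx : 0 < x) : HasDerivAt (fun t => log t - 2 * (t - 1) / (t + 1))
      ((x - 1) ^ 2 / (x * (x + 1) ^ 2)) x := by
    have hnum : HasDerivAt (fun t => 2 * (t - 1)) 2 x := by
      simpa using ((hasDerivAt_id x).sub_const 1).const_mul 2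
    refine ((hasDerivAt_log hx.ne').sub
      (hnum.div ((hasDerivAt_id' x).add_const 1) (by positivity))).congr_deriv ?_
    field_simp
    ring
  refine monotoneOn_of_hasDerivWithinAt_nonneg (convex_Ioi 0)
    (f' := fun x => (x - 1) ^ 2 / (x * (x + 1) ^ 2))
    (fun x hx => (hderiv x hx).continuousAt.continuousWithinAt) ?_ ?_ <;> rw [interior_Ioi]
  · exact fun x hx => (hderiv x hx).hasDerivWithinAt
  · intro x (hx : 0 < x)
    positivity

lemma three_mul_sq_sub_one_div_le_klFun {t : ℝ} (ht : 0 ≤ t) :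
    3 * (t - 1) ^ 2 / (2 * t + 4) ≤ klFun t := by
  rcases ht.eq_or_lt with rfl | ht
  · norm_num [klFun]
  set F : ℝ → ℝ := fun t => klFun t - 3 * (t - 1) ^ 2 / (2 * t + 4)
  set G : ℝ → ℝ := fun t => log t - 2 * (t - 1) / (t + 1)
  have hG1 : G 1 = 0 := by norm_num [G]
  -- `F' = G + (x - 1)³ / (2 (x + 1) (x + 2)²)`, and `G` changes sign at `1` by monotonicity.
  have hderiv (x : ℝ) (hx : 0 < x) :
      HasDerivAt F (G x + (x - 1) ^ 3 / (2 * (x + 1) * (x + 2) ^ 2)) x := by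
    have hquad : HasDerivAt (fun t => 3 * (t - 1) ^ 2) (3 * (2 * (x - 1))) x := by
      simpa using (((hasDerivAt_id x).sub_const 1).pow 2).const_mul 3
    have hlin : HasDerivAt (fun t => 2 * t + 4) 2 x := by
      simpa using ((hasDerivAt_id x).const_mul 2).add_const 4
    refine ((hasDerivAt_klFun hx.ne').sub (hquad.div hlin (by positivity))).congr_deriv ?_
    simp only [G]
    field_simp
    ring
  have hmono := monotoneOn_log_sub_pade
  have key : F 1 ≤ F t := isMinOn_iff.1 (isMinOn_Ioi_zero_of_hasDerivAt one_pos hderiv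
    (fun x hx hx1 => add_nonpos
      (hG1 ▸ hmono (mem_Ioi.2 hx) (mem_Ioi.2 one_pos) hx1.le)
      (div_nonpos_of_nonpos_of_nonneg (Odd.pow_nonpos (by decide) (by linarith)) (by positivity)))
    (fun x hx1 => add_nonneg
      (hG1 ▸ hmono (mem_Ioi.2 one_pos) (mem_Ioi.2 (one_pos.trans hx1)) hx1.le)
      (div_nonneg (pow_nonneg (by linarith) 3) (by positivity)))) t ht
  simpa [F, klFun_one] using key

lemma three_mul_sq_sub_div_le {x y : ℝ} (hx : 0 ≤ x) (hy : 0 ≤ y) (hxy : y = 0 → x = 0) :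
    3 * (x - y) ^ 2 / (2 * x + 4 * y) ≤ x * log (x / y) + y - x := by
  rcases hy.eq_or_lt with rfl | hy
  · simp [hxy rfl]
  have hy0 := hy.ne'
  have hwt : 2 * x + 4 * y ≠ 0 := by positivity
  calc 3 * (x - y) ^ 2 / (2 * x + 4 * y) = y * (3 * (x / y - 1) ^ 2 / (2 * (x / y) + 4)) := by
        field_simp
    _ ≤ y * klFun (x / y) := by
        gcongr
        exact three_mul_sq_sub_one_div_le_klFun (by positivity)
    _ = x * log (x / y) + y - x := by
        rw [klFun_apply]
        field_simp

lemma l1norm_eq_sum_of_nonneg {M : ℕ} {v : Fin M → ℝ} (hv : ∀ j, 0 ≤ v j) :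
    l1norm v = ∑ j, v j :=
  sum_congr rfl fun j _ => abs_of_nonneg (hv j)

lemma sq_l1norm_sub_le {M : ℕ} {x y : Fin M → ℝ} (hx : ∀ j, 0 ≤ x j) (hy : ∀ j, 0 ≤ y j)
    (hxy : ∀ j, y j = 0 → x j = 0) :
    l1norm (fun j => x j - y j) ^ 2 ≤ (2 * ∑ j, x j + 4 * ∑ j, y j) / 3 * Idiv x y := by
  have hweight (j : Fin M) : 0 ≤ 2 * x j + 4 * y j := by linarith [hx j, hy j]
  calc l1norm (fun j => x j - y j) ^ 2
      ≤ (∑ j, (2 * x j + 4 * y j) / 3) * ∑ j, 3 * (x j - y j) ^ 2 / (2 * x j + 4 * y j) := by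
        refine sum_sq_le_sum_mul_sum_of_sq_le_mul _ (fun j _ => by linarith [hweight j])
          (fun j _ => by have := hweight j; positivity) (fun j _ => ?_)
        rcases (hweight j).eq_or_lt with h0 | hpos
        · have hxj : x j = 0 := by linarith [hx j, hy j]
          have hyj : y j = 0 := by linarith [hx j, hy j]
          simp [hxj, hyj]
        · rw [sq_abs, div_mul_div_comm, mul_comm (2 * x j + 4 * y j), mul_div_mul_right _ _ hpos.ne',
            mul_div_cancel_left₀ _ three_ne_zero]
    _ ≤ (∑ j, (2 * x j + 4 * y j) / 3) * Idiv x y :=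
        mul_le_mul_of_nonneg_left
          (sum_le_sum fun j _ => three_mul_sq_sub_div_le (hx j) (hy j) (hxy j))
          (sum_nonneg fun j _ => by linarith [hweight j])
    _ = (2 * ∑ j, x j + 4 * ∑ j, y j) / 3 * Idiv x y := by
        rw [← sum_div, sum_add_distrib, ← mul_sum, ← mul_sum]

theorem l1norm_sub_le_sqrt_two_mul_Idiv {M : ℕ} {p q : Fin M → ℝ} (hp : ∀ j, 0 ≤ p j)
    (hq : ∀ j, 0 ≤ q j) (hpq : ∀ j, q j = 0 → p j = 0) (hp1 : ∑ j, p j = 1)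
    (hq1 : ∑ j, q j = 1) :
    l1norm (fun j => p j - q j) ≤ √(2 * Idiv p q) := by
  have hsq : l1norm (fun j => p j - q j) ^ 2 ≤ 2 * Idiv p q :=
    (sq_l1norm_sub_le hp hq hpq).trans_eq (by rw [hp1, hq1]; norm_num)
  calc l1norm (fun j => p j - q j) = |l1norm (fun j => p j - q j)| :=
        (abs_of_nonneg (sum_nonneg fun j _ => abs_nonneg _)).symm
    _ ≤ √(2 * Idiv p q) := abs_le_sqrt hsq

lemma Idiv_eq_mul_Idiv_normalize_add {M : ℕ} (y lam : Fin M → ℝ)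
    (hsupp : ∀ j, lam j = 0 → y j = 0) (hY : ∑ j, y j ≠ 0) (hΛ : ∑ j, lam j ≠ 0) :
    Idiv y lam = (∑ j, y j) * Idiv (fun j => y j / ∑ i, y i) (fun j => lam j / ∑ i, lam i)
      + (∑ j, lam j) * klFun ((∑ j, y j) / ∑ j, lam j) := by
  set Y := ∑ j, y j with hYdef
  set Λ := ∑ j, lam j with hΛdef
  have hlog (j : Fin M) : y j * log (y j / lam j) =
      Y * (y j / Y * log (y j / Y / (lam j / Λ))) + y j * log (Y / Λ) := by
    by_cases hyj : y j = 0
    · simp [hyj]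
    have hlj : lam j ≠ 0 := fun h => hyj (hsupp j h)
    have hsplit : y j / lam j = y j / Y / (lam j / Λ) * (Y / Λ) := by field_simp
    rw [hsplit, log_mul (by positivity) (by positivity)]
    field_simp
  simp only [Idiv, sum_add_distrib, sum_sub_distrib, ← sum_div, klFun_apply, hlog, ← mul_sum,
    ← sum_mul, ← hYdef, ← hΛdef, div_self hY, div_self hΛ]
  linear_combination (1 - log (Y / Λ)) * mul_div_cancel₀ Y hΛ

theorem l1_normalized_bound_general {M : ℕ} (y lam : Fin M → ℝ)
    (hy : ∀ j, 0 ≤ y j) (hlam : ∀ j, 0 ≤ lam j)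
    (hy0 : y ≠ 0) (hlam0 : lam ≠ 0)
    (hsupp : ∀ j, lam j = 0 → y j = 0)
    (ε : ℝ)
    (h : Idiv y lam ≤ ε) :
    l1norm (fun j => y j / l1norm y - lam j / l1norm lam) ≤
      Real.sqrt (2 * ε / l1norm y) := by
  rw [l1norm_eq_sum_of_nonneg hy, l1norm_eq_sum_of_nonneg hlam]
  have hY : 0 < ∑ j, y j := Fintype.sum_pos (lt_of_le_of_ne hy hy0.symm)
  have hΛ : 0 < ∑ j, lam j := Fintype.sum_pos (lt_of_le_of_ne hlam hlam0.symm)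
  have hpinsker := l1norm_sub_le_sqrt_two_mul_Idiv (fun j => div_nonneg (hy j) hY.le)
    (fun j => div_nonneg (hlam j) hΛ.le)
    (fun j hj => by simp [hsupp j ((div_eq_zero_iff.1 hj).resolve_right hΛ.ne')])
    (by rw [← sum_div, div_self hY.ne']) (by rw [← sum_div, div_self hΛ.ne'])
  refine hpinsker.trans (sqrt_le_sqrt ?_)
  rw [mul_div_assoc]
  gcongr
  rw [le_div_iff₀' hY]
  have hdecomp := Idiv_eq_mul_Idiv_normalize_add y lam hsupp hY.ne' hΛ.ne'
  have hgap := mul_nonneg hΛ.le (klFun_nonneg (div_nonneg hY.le hΛ.le))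
  linarith

/-- Lemma 2: if `I(y‖λ) ≤ ε` then `‖ y/Y − λ/Λ ‖₁ ≤ √(2ε/Y)`, where `Y = ‖y‖₁`, `Λ = ‖λ‖₁`. -/
theorem l1_normalized_bound {M : ℕ} (y lam : Fin M → ℝ)
    (hy : ∀ j, 0 ≤ y j) (hlam : ∀ j, 0 ≤ lam j)
    (hy0 : y ≠ 0) (hlam0 : lam ≠ 0)
    (hsupp : ∀ j, lam j = 0 → y j = 0)
    (ε : ℝ) (hε : 0 < ε)
    (h : Idiv y lam ≤ ε) :
    l1norm (fun j => y j / l1norm y - lam j / l1norm lam) ≤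
      Real.sqrt (2 * ε / l1norm y) :=
  l1_normalized_bound_general y lam hy hlam hy0 hlam0 hsupp ε h
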